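/- The attractor K is invariant under each of the eight self-isometries of the unit square: Γ(K) = K for every Γ ∈ {Γ_v, Γ_h, Γ_{d₁}, Γ_{d₂}, id, Γ_{r₁}, Γ_{r₂}, Γ_{r₃}}. -/

import Mathlib

noncomputable section

/-- The plane ℝ² with the Euclidean metric. -/
abbrev Plane : Type := EuclideanSpace ℝ (Fin 2)

/-- The point (s, t) ∈ ℝ². -/
def pt (s t : ℝ) : Plane := WithLp.toLp 2 ![s, t]

/-- The unit square □ = [0,1] × [0,1]. -/
def unitSq : Set Plane := {z : Plane | z 0 ∈ Set.Icc (0:ℝ) 1 ∧ z 1 ∈ Set.Icc (0:ℝ) 1}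

/-- Vertical reflection Γ_v(x₁,x₂) = (x₁, 1-x₂). -/
def Γv : Plane → Plane := fun x => pt (x 0) (1 - x 1)

/-- Horizontal reflection Γ_h(x₁,x₂) = (1-x₁, x₂). -/
def Γh : Plane → Plane := fun x => pt (1 - x 0) (x 1)

/-- Diagonal reflection Γ_{d₁}(x₁,x₂) = (x₂, x₁). -/
def Γd₁ : Plane → Plane := fun x => pt (x 1) (x 0)

/-- Anti-diagonal reflection Γ_{d₂}(x₁,x₂) = (1-x₂, 1-x₁). -/
def Γd₂ : Plane → Plane := fun x => pt (1 - x 1) (1 - x 0)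

/-- Counter-clockwise rotation by π/2 around the center: Γ_{r₁}(x₁,x₂) = (1-x₂, x₁).
    The rotations Γ_{r_j} are `Γr^[j]`, and Γ_{r₄} = `Γr^[4]` = id. -/
def Γr : Plane → Plane := fun x => pt (1 - x 1) (x 0)

/-- The basic contraction ratio a = √(7/24) − 1/2. -/
def aa : ℝ := Real.sqrt (7/24) - 1/2

/-- The maps F_i for 1 ≤ i ≤ 13:
    F_{2j+1}(x) = a·x + (j/24, 0) (0 ≤ j ≤ 5), F_{2j+2}(x) = a²·x + (a + j/24, 0) (0 ≤ j ≤ 5),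
    F_{13}(x) = (1/4)·x + (1/4, 0). -/
def Fbase : ℕ → Plane → Plane := fun i x =>
  if i = 13 then (1/4 : ℝ) • x + pt (1/4) 0
  else if i % 2 = 1 then aa • x + pt ((((i - 1) / 2 : ℕ) : ℝ) / 24) 0
  else aa ^ 2 • x + pt (aa + (((i - 2) / 2 : ℕ) : ℝ) / 24) 0

/-- The maps F_i for 1 ≤ i ≤ 26: F_i = Γ_h ∘ F_{27-i} ∘ Γ_h for 14 ≤ i ≤ 26. -/
def Fq : ℕ → Plane → Plane := fun i =>
  if i ≤ 13 then Fbase i else Γh ∘ Fbase (27 - i) ∘ Γh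

/-- The full iterated function system F_1, …, F_104:
    F_{i+25j} = Γ_{r_j} ∘ F_i ∘ Γ_{r_{4-j}} for 1 ≤ i ≤ 25, 1 ≤ j ≤ 3 (here for
    27 ≤ i ≤ 100 one has j = (i-1)/25 ∈ {1,2,3} and i - 25j ∈ {1,…,25});
    F_{101},…,F_{104} are the four central quarter squares. -/
def Fmap : ℕ → Plane → Plane := fun i =>
  if i ≤ 26 then Fq i
  else if i ≤ 100 then Γr^[(i - 1) / 25] ∘ Fq (i - 25 * ((i - 1) / 25)) ∘ Γr^[4 - (i - 1) / 25]
  else if i = 101 then fun x => (1/4 : ℝ) • x + pt (1/4) (1/4)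
  else if i = 102 then fun x => (1/4 : ℝ) • x + pt (1/2) (1/4)
  else if i = 103 then fun x => (1/4 : ℝ) • x + pt (1/2) (1/2)
  else fun x => (1/4 : ℝ) • x + pt (1/4) (1/2)

/-- The contraction ratio of F_i for 1 ≤ i ≤ 13. -/
def ρbase : ℕ → ℝ := fun i =>
  if i = 13 then 1/4 else if i % 2 = 1 then aa else aa ^ 2

/-- The contraction ratio of F_i for 1 ≤ i ≤ 26. -/
def ρq : ℕ → ℝ := fun i => if i ≤ 13 then ρbase i else ρbase (27 - i)

/-- The contraction ratio ρ_i of F_i for 1 ≤ i ≤ 104. -/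
def rho : ℕ → ℝ := fun i =>
  if i ≤ 26 then ρq i
  else if i ≤ 100 then ρq (i - 25 * ((i - 1) / 25))
  else 1/4

end

/-!
The Hutchinson operator `A ↦ ⋃ i, Fᵢ(A)` of a family of `c`-Lipschitz maps with `c < 1` contracts
the Hausdorff distance by `c`, so it has at most one nonempty compact fixed point. If an isometry
`Γ` satisfies `Γ ∘ Fᵢ = F_{σ i} ∘ Γ` for a permutation `σ` of the indices, then `Γ(K)` is again
such a fixed point, hence `Γ(K) = K`. For this system such permutations exist for the quarter turn
`Γ_{r₁}` and the reflection `Γ_h`, and these generate the symmetry group of the square.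
-/

open Metric

section Hutchinson

variable {X ι : Type*}

def hutchinson (f : ι → X → X) (s : Set ι) (A : Set X) : Set X := ⋃ i ∈ s, f i '' A

theorem image_hutchinson_of_semiconj {f : ι → X → X} {s : Set ι} {Γ : X → X}
    {σ : ι → ι} (hσ : σ '' s = s) (hΓ : ∀ i ∈ s, Function.Semiconj Γ (f i) (f (σ i)))
    (A : Set X) :
    Γ '' hutchinson f s A = hutchinson f s (Γ '' A) := by
  simp only [hutchinson, Set.image_iUnion₂]
  conv_rhs => rw [← hσ, Set.biUnion_image]
  exact Set.iUnion₂_congr fun i hi => (hΓ i hi).set_image A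

theorem LipschitzWith.infDist_image_le {Y : Type*} [PseudoMetricSpace X] [PseudoMetricSpace Y]
    {K : NNReal} {f : X → Y} (hf : LipschitzWith K f) (x : X) {t : Set X} (ht : t.Nonempty) :
    infDist (f x) (f '' t) ≤ K * infDist x t := by
  have : Nonempty t := ht.to_subtype
  rw [infDist_eq_iInf (x := x), Real.mul_iInf_of_nonneg K.coe_nonneg]
  exact le_ciInf fun y => (infDist_le_dist_of_mem (Set.mem_image_of_mem f y.2)).trans
    (hf.dist_le_mul x y)

variable [MetricSpace X] {f : ι → X → X} {s : Set ι} {K : NNReal}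

theorem infDist_hutchinson_le (hf : ∀ i ∈ s, LipschitzWith K (f i)) {A B : Set X}
    (hB : B.Nonempty) (hAB : hausdorffEDist A B ≠ ⊤) {x : X} (hx : x ∈ hutchinson f s A) :
    infDist x (hutchinson f s B) ≤ K * hausdorffDist A B := by
  simp only [hutchinson, Set.mem_iUnion₂] at hx
  obtain ⟨i, hi, a, ha, rfl⟩ := hx
  calc infDist (f i a) (hutchinson f s B)
      ≤ infDist (f i a) (f i '' B) :=
        infDist_le_infDist_of_subset (Set.subset_biUnion_of_mem (u := fun i => f i '' B) hi)
          (hB.image _)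
    _ ≤ K * infDist a B := (hf i hi).infDist_image_le a hB
    _ ≤ K * hausdorffDist A B := by
        gcongr; exact infDist_le_hausdorffDist_of_mem ha hAB

theorem hausdorffDist_hutchinson_le (hf : ∀ i ∈ s, LipschitzWith K (f i)) {A B : Set X}
    (hA : A.Nonempty) (hB : B.Nonempty) (hAB : hausdorffEDist A B ≠ ⊤) :
    hausdorffDist (hutchinson f s A) (hutchinson f s B) ≤ K * hausdorffDist A B := by
  refine hausdorffDist_le_of_infDist (mul_nonneg K.coe_nonneg hausdorffDist_nonneg)
    (fun x hx => infDist_hutchinson_le hf hB hAB hx) fun x hx => ?_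
  rw [hausdorffDist_comm]
  exact infDist_hutchinson_le hf hA (by rwa [hausdorffEDist_comm]) hx

theorem eq_of_hutchinson_eq_self (hK : K < 1) (hf : ∀ i ∈ s, LipschitzWith K (f i))
    {A B : Set X} (hA : IsCompact A) (hB : IsCompact B) (hA₀ : A.Nonempty) (hB₀ : B.Nonempty)
    (hAfix : hutchinson f s A = A) (hBfix : hutchinson f s B = B) : A = B := by
  have hAB : hausdorffEDist A B ≠ ⊤ :=
    hausdorffEDist_ne_top_of_nonempty_of_bounded hA₀ hB₀ hA.isBounded hB.isBounded
  have hcontr := hausdorffDist_hutchinson_le hf hA₀ hB₀ hAB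
  rw [hAfix, hBfix] at hcontr
  have hK' : (K : ℝ) < 1 := hK
  have hzero : hausdorffDist A B = 0 :=
    le_antisymm (by nlinarith [hausdorffDist_nonneg (s := A) (t := B)]) hausdorffDist_nonneg
  exact (hA.isClosed.hausdorffDist_zero_iff_eq hB.isClosed hAB).mp hzero

theorem image_eq_self_of_semiconj (hK : K < 1) (hf : ∀ i ∈ s, LipschitzWith K (f i))
    {A : Set X} (hA : IsCompact A) (hA₀ : A.Nonempty) (hAfix : hutchinson f s A = A)
    {Γ : X → X} (hΓc : Continuous Γ) {σ : ι → ι} (hσ : σ '' s = s)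
    (hΓ : ∀ i ∈ s, Function.Semiconj Γ (f i) (f (σ i))) : Γ '' A = A :=
  eq_of_hutchinson_eq_self hK hf (hA.image hΓc) hA (hA₀.image Γ) hA₀
    (by rw [← image_hutchinson_of_semiconj hσ hΓ, hAfix]) hAfix

end Hutchinson

@[simp] lemma pt_zero (s t : ℝ) : pt s t 0 = s := rfl
@[simp] lemma pt_one (s t : ℝ) : pt s t 1 = t := rfl

lemma Plane.ext {x y : Plane} (h₀ : x 0 = y 0) (h₁ : x 1 = y 1) : x = y := by
  ext i; fin_cases i <;> assumption

lemma Γr_iterate_four : Γr^[4] = id :=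
  funext fun x => Plane.ext (by simp [Γr]) (by simp [Γr])

lemma Γr_iterate_congr {a b : ℕ} (h : a % 4 = b % 4) : Γr^[a] = Γr^[b] := by
  have hper (x : Plane) : Function.IsPeriodicPt Γr 4 x := congrFun Γr_iterate_four x
  funext x
  rw [← (hper x).iterate_mod_apply a, ← (hper x).iterate_mod_apply b, h]

lemma Γh_Γh (x : Plane) : Γh (Γh x) = x := Plane.ext (by simp [Γh]) (by simp [Γh])

lemma Γh_Γr_iterate (n : ℕ) (x : Plane) : Γh (Γr^[n] x) = Γr^[3 * n] (Γh x) := by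
  induction n with
  | zero => rfl
  | succ n ih =>
    have hΓ (y : Plane) : Γh (Γr y) = Γr^[3] (Γh y) :=
      Plane.ext (by simp [Γh, Γr]) (by simp [Γh, Γr])
    rw [Function.iterate_succ_apply', hΓ, ih, ← Function.iterate_add_apply,
      show 3 * (n + 1) = 3 + 3 * n by ring]

-- `F₂₆` is defined as the `Γ_h`-conjugate of `F₁`, but it is also the first rotated copy of `F₁`.
lemma Fq_twentySix (x : Plane) : Fq 26 x = Γr (Fq 1 (Γr^[3] x)) := by
  apply Plane.ext <;> norm_num [Fq, Fbase, Γh, Γr]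

lemma Γh_Fq {k : ℕ} (hk₁ : 1 ≤ k) (hk₂ : k ≤ 26) (x : Plane) :
    Γh (Fq k x) = Fq (27 - k) (Γh x) := by
  by_cases hk : k ≤ 13
  · simp [Fq, hk, show ¬ 27 - k ≤ 13 by omega, show 27 - (27 - k) = k by omega, Γh_Γh]
  · simp [Fq, hk, show 27 - k ≤ 13 by omega, Γh_Γh]

lemma Fmap_add_mul {k m : ℕ} (hk₁ : 1 ≤ k) (hk₂ : k ≤ 25) (hm : m < 4) (x : Plane) :
    Fmap (k + 25 * m) x = Γr^[m] (Fq k (Γr^[4 - m] x)) := by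
  by_cases h : k + 25 * m ≤ 26
  · obtain ⟨rfl, -⟩ | ⟨rfl, rfl⟩ : m = 0 ∧ 1 ≤ k ∨ m = 1 ∧ k = 1 := by omega
    · simp only [mul_zero, add_zero, tsub_zero, Γr_iterate_four]
      simp [Fmap, show k ≤ 26 by omega]
    · exact Fq_twentySix x
  · simp only [Fmap, if_neg h, if_pos (show k + 25 * m ≤ 100 by omega),
      show (k + 25 * m - 1) / 25 = m by omega, show k + 25 * m - 25 * m = k by omega,
      Function.comp_apply]

lemma Fmap_Γr_iterate {k a b c : ℕ} (hk₁ : 1 ≤ k) (hk₂ : k ≤ 25)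
    (h : (a + b) % 4 = c % 4) (x : Plane) :
    Fmap (k + 25 * (a % 4)) (Γr^[c] x) = Γr^[a] (Fq k (Γr^[b] x)) := by
  rw [Fmap_add_mul hk₁ hk₂ (Nat.mod_lt a (by norm_num)), ← Function.iterate_add_apply,
    Γr_iterate_congr (a := a % 4) (b := a) (by omega),
    Γr_iterate_congr (a := 4 - a % 4 + c) (b := b) (by omega)]

lemma exists_eq_add_twentyFive_mul {i : ℕ} (h₁ : 1 ≤ i) (h₂ : i ≤ 100) :
    ∃ k m, 1 ≤ k ∧ k ≤ 25 ∧ m < 4 ∧ i = k + 25 * m :=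
  ⟨i - 25 * ((i - 1) / 25), (i - 1) / 25, by omega, by omega, by omega, by omega⟩

-- `Γ_{r₁}` moves `F_{k+25j}` to `F_{k+25(j+1)}` and cycles the central squares `F₁₀₁,…,F₁₀₄`;
-- `Γ_h` moves `F_{k+25j}` to `F_{(27-k)+25(4-j)}` and swaps `F₁₀₁ ↔ F₁₀₂`, `F₁₀₃ ↔ F₁₀₄`.
def rotIndex (i : ℕ) : ℕ :=
  if i ≤ 75 then i + 25 else if i ≤ 100 then i - 75 else if i ≤ 103 then i + 1 else 101

def reflIndex (i : ℕ) : ℕ :=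
  if i ≤ 26 then 27 - i else if i ≤ 100 then 127 - i else if i % 2 = 1 then i + 1 else i - 1

lemma semiconj_Γr_Fmap {i : ℕ} (hi : i ∈ Set.Icc 1 104) :
    Function.Semiconj Γr (Fmap i) (Fmap (rotIndex i)) := by
  intro x
  obtain ⟨hi₁, hi₂⟩ := hi
  rcases le_or_gt i 100 with h | h
  · obtain ⟨k, m, hk₁, hk₂, hm, rfl⟩ := exists_eq_add_twentyFive_mul hi₁ h
    have hidx : rotIndex (k + 25 * m) = k + 25 * ((m + 1) % 4) := by
      unfold rotIndex; split_ifs <;> omega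
    rw [hidx, Fmap_add_mul hk₁ hk₂ hm, ← Function.iterate_succ_apply' Γr]
    exact (Fmap_Γr_iterate (c := 1) hk₁ hk₂ (by omega) x).symm
  · interval_cases i <;> apply Plane.ext <;> norm_num [Fmap, rotIndex, Γr] <;> ring

lemma semiconj_Γh_Fmap {i : ℕ} (hi : i ∈ Set.Icc 1 104) :
    Function.Semiconj Γh (Fmap i) (Fmap (reflIndex i)) := by
  intro x
  obtain ⟨hi₁, hi₂⟩ := hi
  rcases le_or_gt i 100 with h | h
  · obtain ⟨k, m, hk₁, hk₂, hm, rfl⟩ := exists_eq_add_twentyFive_mul hi₁ h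
    rw [Fmap_add_mul hk₁ hk₂ hm, Γh_Γr_iterate, Γh_Fq hk₁ (by omega), Γh_Γr_iterate]
    rcases eq_or_lt_of_le hk₁ with rfl | hk
    · have hidx : reflIndex (1 + 25 * m) = 1 + 25 * ((3 * m + 1) % 4) := by
        unfold reflIndex; split_ifs <;> omega
      rw [hidx, Fq_twentySix, ← Function.iterate_succ_apply Γr, ← Function.iterate_add_apply]
      exact (Fmap_Γr_iterate (c := 0) le_rfl (by norm_num) (by omega) (Γh x)).symm
    · have hidx : reflIndex (k + 25 * m) = 27 - k + 25 * ((3 * m) % 4) := by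
        unfold reflIndex; split_ifs <;> omega
      rw [hidx]
      exact (Fmap_Γr_iterate (c := 0) (by omega) (by omega) (by omega) (Γh x)).symm
  · interval_cases i <;> apply Plane.ext <;> norm_num [Fmap, reflIndex, Γh] <;> ring

lemma image_rotIndex : rotIndex '' Set.Icc 1 104 = Set.Icc 1 104 := by
  refine (Set.MapsTo.image_subset fun i hi => ?_).antisymm fun j hj => ?_
  · obtain ⟨hi₁, hi₂⟩ := hi
    simp only [Set.mem_Icc, rotIndex]
    split_ifs <;> omega
  · obtain ⟨hj₁, hj₂⟩ := hj
    refine ⟨if j ≤ 25 then j + 75 else if j ≤ 100 then j - 25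
      else if j = 101 then 104 else j - 1, ?_, ?_⟩
    · simp only [Set.mem_Icc]
      split_ifs <;> omega
    · simp only [rotIndex]
      split_ifs <;> omega

lemma image_reflIndex : reflIndex '' Set.Icc 1 104 = Set.Icc 1 104 := by
  have hmaps : Set.MapsTo reflIndex (Set.Icc 1 104) (Set.Icc 1 104) := by
    rintro i ⟨hi₁, hi₂⟩
    simp only [Set.mem_Icc, reflIndex]
    split_ifs <;> omega
  refine hmaps.image_subset.antisymm fun j hj => ⟨reflIndex j, hmaps hj, ?_⟩
  obtain ⟨hj₁, hj₂⟩ := hj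
  simp only [reflIndex]
  split_ifs <;> omega

lemma isometry_Γr : Isometry Γr := Isometry.of_dist_eq fun x y => by
  simp only [EuclideanSpace.dist_eq, Fin.sum_univ_two, Γr, Real.dist_eq, pt_zero, pt_one, sq_abs]
  ring_nf

lemma isometry_Γh : Isometry Γh := Isometry.of_dist_eq fun x y => by
  simp only [EuclideanSpace.dist_eq, Fin.sum_univ_two, Γh, Real.dist_eq, pt_zero, pt_one, sq_abs]
  ring_nf

lemma lipschitzWith_smul_add (c : ℝ) (b : Plane) :
    LipschitzWith ‖c‖₊ fun x : Plane => c • x + b := by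
  simpa using (lipschitzWith_smul c).add (LipschitzWith.const b)

lemma nnnorm_le_quarter {c : ℝ} (h₀ : 0 ≤ c) (h : c ≤ 1 / 4) : ‖c‖₊ ≤ 1 / 4 := by
  rw [← NNReal.coe_le_coe, coe_nnnorm, Real.norm_of_nonneg h₀]
  simpa using h

lemma aa_pos : 0 < aa := by
  have : (1 / 2 : ℝ) < Real.sqrt (7 / 24) := by
    rw [Real.lt_sqrt (by norm_num)]; norm_num
  simp only [aa]; linarith

lemma aa_lt_quarter : aa < 1 / 4 := by
  have : Real.sqrt (7 / 24) < 3 / 4 := by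
    rw [Real.sqrt_lt' (by norm_num)]; norm_num
  simp only [aa]; linarith

lemma lipschitzWith_Fbase (i : ℕ) : LipschitzWith (1 / 4) (Fbase i) := by
  have h₀ := aa_pos
  have h₁ := aa_lt_quarter
  unfold Fbase
  split_ifs
  · exact (lipschitzWith_smul_add _ _).weaken (nnnorm_le_quarter (by norm_num) le_rfl)
  · exact (lipschitzWith_smul_add _ _).weaken (nnnorm_le_quarter h₀.le h₁.le)
  · exact (lipschitzWith_smul_add _ _).weaken (nnnorm_le_quarter (by positivity) (by nlinarith))

lemma lipschitzWith_Fq (i : ℕ) : LipschitzWith (1 / 4) (Fq i) := by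
  unfold Fq
  split_ifs
  · exact lipschitzWith_Fbase i
  · simpa using isometry_Γh.lipschitz.comp ((lipschitzWith_Fbase _).comp isometry_Γh.lipschitz)

lemma lipschitzWith_Fmap (i : ℕ) : LipschitzWith (1 / 4) (Fmap i) := by
  unfold Fmap
  split_ifs
  · exact lipschitzWith_Fq i
  · simpa using (isometry_Γr.lipschitz.iterate _).comp
      ((lipschitzWith_Fq _).comp (isometry_Γr.lipschitz.iterate _))
  all_goals exact (lipschitzWith_smul_add _ _).weaken (nnnorm_le_quarter (by norm_num) le_rfl)

lemma Γv_eq : Γv = Γr^[2] ∘ Γh :=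
  funext fun _ => Plane.ext (by simp [Γv, Γr, Γh]) (by simp [Γv, Γr, Γh])

lemma Γd₁_eq : Γd₁ = Γh ∘ Γr :=
  funext fun _ => Plane.ext (by simp [Γd₁, Γr, Γh]) (by simp [Γd₁, Γr, Γh])

lemma Γd₂_eq : Γd₂ = Γr ∘ Γh :=
  funext fun _ => Plane.ext (by simp [Γd₂, Γr, Γh]) (by simp [Γd₂, Γr, Γh])

/-- The attractor K is invariant under each of the eight self-isometries of the
    unit square: Γ(K) = K for Γ ∈ {Γ_v, Γ_h, Γ_{d₁}, Γ_{d₂}, id, Γ_{r₁}, Γ_{r₂}, Γ_{r₃}}. -/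
theorem stmt7 (K : Set Plane) (hne : K.Nonempty) (hcomp : IsCompact K)
    (hK : K = ⋃ i ∈ Finset.Icc 1 104, Fmap i '' K) :
    ∀ Γ ∈ ({Γv, Γh, Γd₁, Γd₂, id, Γr, Γr^[2], Γr^[3]} : Set (Plane → Plane)),
      Γ '' K = K := by
  have hfix : hutchinson Fmap (Set.Icc 1 104) K = K := by
    rw [← Finset.coe_Icc]; exact hK.symm
  have hquarter : (1 / 4 : NNReal) < 1 := by norm_num
  have hlip (i : ℕ) (_ : i ∈ Set.Icc 1 104) := lipschitzWith_Fmap i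
  have hR : Γr '' K = K := image_eq_self_of_semiconj hquarter hlip hcomp hne hfix
    isometry_Γr.continuous image_rotIndex fun _ => semiconj_Γr_Fmap
  have hH : Γh '' K = K := image_eq_self_of_semiconj hquarter hlip hcomp hne hfix
    isometry_Γh.continuous image_reflIndex fun _ => semiconj_Γh_Fmap
  have hRn (n : ℕ) : Γr^[n] '' K = K := by
    rw [Set.image_iterate_eq]; exact Function.IsFixedPt.iterate hR n
  rintro Γ (rfl | rfl | rfl | rfl | rfl | rfl | rfl | rfl)
  · rw [Γv_eq, Set.image_comp, hH, hRn]
  · exact hH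
  · rw [Γd₁_eq, Set.image_comp, hR, hH]
  · rw [Γd₂_eq, Set.image_comp, hH, hR]
  · exact Set.image_id K
  · exact hR
  · exact hRn 2
  · exact hRn 3
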